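/- Let X⁰, X¹ ∈ ℝ be constants. Suppose the eight components ψ_{ς₀ς₁ς₂} are C¹ on an open subset of ℝ⁶ and satisfy the free multi-time equations there. For μ, ν, κ ∈ {0,1} define the current j_X^{μνκ} := (1/4) Σ_{ς₀,ς₁,ς₂ ∈ {−1,+1}} (X⁰ + ς₀X¹)(−ς₀)^μ(−ς₁)^ν(−ς₂)^κ |ψ_{ς₀ς₁ς₂}|², where (−ς)^μ means 1 if μ = 0 and −ς if μ = 1. Then the current is jointly conserved: for all ν, κ one has ∂_{t_ph} j_X^{0νκ} + ∂_{s_ph} j_X^{1νκ} = 0; for all μ, κ one has ∂_{t_e1} j_X^{μ0κ} + ∂_{s_e1} j_X^{μ1κ} = 0; and for all μ, ν one has ∂_{t_e2} j_X^{μν0} + ∂_{s_e2} j_X^{μν1} = 0. -/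

import Mathlib

/-!
Along its own pair of coordinates each component obeys `∂_t ψ_ς = ς ∂_s ψ_ς + c ψ_{-ς}` with
`c = -iω` purely imaginary (and `c = 0` for the photon). Since `∂|ψ|² = 2⟪ψ, ∂ψ⟫` for the real
inner product `⟪z, w⟫ = Re (z̄ w)` on `ℂ`, the weight `(-ς)^μ` of the differentiated slot turns
`∂_t j^{…0…} + ∂_s j^{…1…}` into a weighted sum of `2⟪ψ_ς, c ψ_{-ς}⟫`. For the photon these terms
vanish, and for an electron the terms for `ς` and `-ς` cancel, because multiplication by a purely
imaginary number is skew-adjoint.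
-/

open Complex

noncomputable section

/-- Partial derivative (in coordinate `i`) of a complex-valued function on `ℝⁿ`. -/
def pdC {n : ℕ} (i : Fin n) (f : (Fin n → ℝ) → ℂ) (x : Fin n → ℝ) : ℂ :=
  fderiv ℝ f x (Pi.single i 1)

/-- Partial derivative (in coordinate `i`) of a real-valued function on `ℝⁿ`. -/
def pdR {n : ℕ} (i : Fin n) (f : (Fin n → ℝ) → ℝ) (x : Fin n → ℝ) : ℝ :=
  fderiv ℝ f x (Pi.single i 1)

/-- `(−ς)^μ`, meaning `1` if `μ = 0` and `−ς` if `μ = 1`. -/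
def sgnpow (μ : ℕ) (ς : ℝ) : ℝ := if μ = 0 then 1 else -ς

/-- The current `j_X^{μνκ}` built from the eight components `ψ_{ς₀ς₁ς₂}`.
Coordinates on `ℝ⁶` are `(t_ph, s_ph, t_e1, s_e1, t_e2, s_e2)`. -/
def currentJ (X0 X1 : ℝ) (ψ : ℝ → ℝ → ℝ → (Fin 6 → ℝ) → ℂ) (μ ν κ : ℕ)
    (x : Fin 6 → ℝ) : ℝ :=
  (1 / 4) * ∑ ς₀ ∈ ({-1, 1} : Finset ℝ), ∑ ς₁ ∈ ({-1, 1} : Finset ℝ),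
      ∑ ς₂ ∈ ({-1, 1} : Finset ℝ),
        (X0 + ς₀ * X1) * sgnpow μ ς₀ * sgnpow ν ς₁ * sgnpow κ ς₂ * ‖ψ ς₀ ς₁ ς₂ x‖ ^ 2

open scoped InnerProductSpace

lemma sgnpow_zero (ς : ℝ) : sgnpow 0 ς = 1 := rfl

lemma sgnpow_one (ς : ℝ) : sgnpow 1 ς = -ς := rfl

lemma mem_signs_of_mem_finset {ς : ℝ} (h : ς ∈ ({-1, 1} : Finset ℝ)) :
    ς ∈ ({-1, 1} : Set ℝ) := by
  simpa using h

lemma inner_sub_ofReal_mul_eq_neg {a z w v : ℂ} {s : ℝ} (h : z - s * w + v = 0) :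
    ⟪a, z⟫_ℝ - s * ⟪a, w⟫_ℝ = -⟪a, v⟫_ℝ := by
  rw [← real_inner_smul_right, ← inner_sub_right, ← inner_neg_right, RCLike.real_smul_eq_coe_mul,
    ← eq_neg_of_add_eq_zero_left h]
  rfl

lemma inner_mul_add_inner_mul_swap (a b : ℂ) {c : ℂ} (hc : c.re = 0) :
    ⟪a, c * b⟫_ℝ + ⟪b, c * a⟫_ℝ = 0 := by
  simp only [Complex.inner, mul_re, mul_im, conj_re, conj_im, hc]
  ring

lemma sum_signs_inner_mul_neg (g : ℝ → ℂ) {c : ℂ} (hc : c.re = 0) :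
    ∑ ς ∈ ({-1, 1} : Finset ℝ), ⟪g ς, c * g (-ς)⟫_ℝ = 0 := by
  rw [Finset.sum_pair (by norm_num), neg_neg]
  exact inner_mul_add_inner_mul_swap _ _ hc

lemma sum_signs_inner_sub_eq_zero {g z w : ℝ → ℂ} {c : ℂ} (hc : c.re = 0)
    (h : ∀ ς ∈ ({-1, 1} : Set ℝ), z ς - ς * w ς + c * g (-ς) = 0) :
    ∑ ς ∈ ({-1, 1} : Finset ℝ), (⟪g ς, z ς⟫_ℝ - ς * ⟪g ς, w ς⟫_ℝ) = 0 := by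
  rw [Finset.sum_congr rfl fun ς hς =>
      inner_sub_ofReal_mul_eq_neg (h ς (mem_signs_of_mem_finset hς)), Finset.sum_neg_distrib,
    sum_signs_inner_mul_neg g hc, neg_zero]

section Conservation

variable {X0 X1 : ℝ} {ψ : ℝ → ℝ → ℝ → (Fin 6 → ℝ) → ℂ} {x : Fin 6 → ℝ}

lemma pdR_currentJ
    (hψ : ∀ ς₀ ∈ ({-1, 1} : Set ℝ), ∀ ς₁ ∈ ({-1, 1} : Set ℝ), ∀ ς₂ ∈ ({-1, 1} : Set ℝ),
      DifferentiableAt ℝ (ψ ς₀ ς₁ ς₂) x) (μ ν κ : ℕ) (i : Fin 6) :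
    pdR i (currentJ X0 X1 ψ μ ν κ) x =
      (1 / 4) * ∑ ς₀ ∈ ({-1, 1} : Finset ℝ), ∑ ς₁ ∈ ({-1, 1} : Finset ℝ),
        ∑ ς₂ ∈ ({-1, 1} : Finset ℝ), (X0 + ς₀ * X1) * sgnpow μ ς₀ * sgnpow ν ς₁ * sgnpow κ ς₂ *
          (2 * ⟪ψ ς₀ ς₁ ς₂ x, pdC i (ψ ς₀ ς₁ ς₂) x⟫_ℝ) := by
  have hJ : HasFDerivAt (currentJ X0 X1 ψ μ ν κ)
      ((1 / 4 : ℝ) • ∑ ς₀ ∈ ({-1, 1} : Finset ℝ), ∑ ς₁ ∈ ({-1, 1} : Finset ℝ),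
        ∑ ς₂ ∈ ({-1, 1} : Finset ℝ), ((X0 + ς₀ * X1) * sgnpow μ ς₀ * sgnpow ν ς₁ * sgnpow κ ς₂) •
          (2 • (innerSL ℝ (ψ ς₀ ς₁ ς₂ x)).comp (fderiv ℝ (ψ ς₀ ς₁ ς₂) x))) x := by
    refine .const_mul (.fun_sum fun ς₀ h₀ => .fun_sum fun ς₁ h₁ => .fun_sum fun ς₂ h₂ => ?_) _
    exact (hψ ς₀ (mem_signs_of_mem_finset h₀) ς₁ (mem_signs_of_mem_finset h₁) ς₂
      (mem_signs_of_mem_finset h₂)).hasFDerivAt.norm_sq.const_mul _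
  simp only [pdR, pdC, hJ.fderiv, smul_apply, sum_apply, ContinuousLinearMap.comp_apply,
    coe_innerSL_apply, nsmul_eq_mul, Nat.cast_ofNat, smul_eq_mul]

lemma pdR_currentJ_ph_add_eq_zero
    (hψ : ∀ ς₀ ∈ ({-1, 1} : Set ℝ), ∀ ς₁ ∈ ({-1, 1} : Set ℝ), ∀ ς₂ ∈ ({-1, 1} : Set ℝ),
      DifferentiableAt ℝ (ψ ς₀ ς₁ ς₂) x)
    (hph : ∀ ς₀ ∈ ({-1, 1} : Set ℝ), ∀ ς₁ ∈ ({-1, 1} : Set ℝ), ∀ ς₂ ∈ ({-1, 1} : Set ℝ),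
      pdC 0 (ψ ς₀ ς₁ ς₂) x - (ς₀ : ℂ) * pdC 1 (ψ ς₀ ς₁ ς₂) x = 0) (ν κ : ℕ) :
    pdR 0 (currentJ X0 X1 ψ 0 ν κ) x + pdR 1 (currentJ X0 X1 ψ 1 ν κ) x = 0 := by
  rw [pdR_currentJ hψ, pdR_currentJ hψ, ← mul_add]
  simp only [← Finset.sum_add_distrib]
  refine mul_eq_zero_of_right _ (Finset.sum_eq_zero fun ς₀ h₀ => Finset.sum_eq_zero
    fun ς₁ h₁ => Finset.sum_eq_zero fun ς₂ h₂ => ?_)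
  have h := inner_sub_ofReal_mul_eq_neg (a := ψ ς₀ ς₁ ς₂ x) (v := 0) <| by
    rw [add_zero]
    exact hph ς₀ (mem_signs_of_mem_finset h₀) ς₁ (mem_signs_of_mem_finset h₁) ς₂
      (mem_signs_of_mem_finset h₂)
  rw [inner_zero_right, neg_zero] at h
  simp only [sgnpow_zero, sgnpow_one]
  linear_combination 2 * (X0 + ς₀ * X1) * sgnpow ν ς₁ * sgnpow κ ς₂ * h

lemma pdR_currentJ_e1_add_eq_zero {ω : ℝ}
    (hψ : ∀ ς₀ ∈ ({-1, 1} : Set ℝ), ∀ ς₁ ∈ ({-1, 1} : Set ℝ), ∀ ς₂ ∈ ({-1, 1} : Set ℝ),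
      DifferentiableAt ℝ (ψ ς₀ ς₁ ς₂) x)
    (he1 : ∀ ς₀ ∈ ({-1, 1} : Set ℝ), ∀ ς₁ ∈ ({-1, 1} : Set ℝ), ∀ ς₂ ∈ ({-1, 1} : Set ℝ),
      pdC 2 (ψ ς₀ ς₁ ς₂) x - (ς₁ : ℂ) * pdC 3 (ψ ς₀ ς₁ ς₂) x
        + Complex.I * (ω : ℂ) * ψ ς₀ (-ς₁) ς₂ x = 0) (μ κ : ℕ) :
    pdR 2 (currentJ X0 X1 ψ μ 0 κ) x + pdR 3 (currentJ X0 X1 ψ μ 1 κ) x = 0 := by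
  rw [pdR_currentJ hψ, pdR_currentJ hψ, ← mul_add]
  simp only [← Finset.sum_add_distrib]
  refine mul_eq_zero_of_right _ (Finset.sum_eq_zero fun ς₀ h₀ => ?_)
  rw [Finset.sum_comm]
  refine Finset.sum_eq_zero fun ς₂ h₂ => ?_
  have hmass := sum_signs_inner_sub_eq_zero (g := fun ς₁ => ψ ς₀ ς₁ ς₂ x)
    (z := fun ς₁ => pdC 2 (ψ ς₀ ς₁ ς₂) x) (w := fun ς₁ => pdC 3 (ψ ς₀ ς₁ ς₂) x) (c := I * ω)
    (by simp) fun ς₁ h₁ => he1 ς₀ (mem_signs_of_mem_finset h₀) ς₁ h₁ ς₂ (mem_signs_of_mem_finset h₂)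
  calc _ = 2 * (X0 + ς₀ * X1) * sgnpow μ ς₀ * sgnpow κ ς₂ * ∑ ς₁ ∈ ({-1, 1} : Finset ℝ),
        (⟪ψ ς₀ ς₁ ς₂ x, pdC 2 (ψ ς₀ ς₁ ς₂) x⟫_ℝ - ς₁ * ⟪ψ ς₀ ς₁ ς₂ x, pdC 3 (ψ ς₀ ς₁ ς₂) x⟫_ℝ) := by
        rw [Finset.mul_sum]
        refine Finset.sum_congr rfl fun ς₁ _ => ?_
        simp only [sgnpow_zero, sgnpow_one]
        ring
    _ = 0 := by rw [hmass, mul_zero]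

lemma pdR_currentJ_e2_add_eq_zero {ω : ℝ}
    (hψ : ∀ ς₀ ∈ ({-1, 1} : Set ℝ), ∀ ς₁ ∈ ({-1, 1} : Set ℝ), ∀ ς₂ ∈ ({-1, 1} : Set ℝ),
      DifferentiableAt ℝ (ψ ς₀ ς₁ ς₂) x)
    (he2 : ∀ ς₀ ∈ ({-1, 1} : Set ℝ), ∀ ς₁ ∈ ({-1, 1} : Set ℝ), ∀ ς₂ ∈ ({-1, 1} : Set ℝ),
      pdC 4 (ψ ς₀ ς₁ ς₂) x - (ς₂ : ℂ) * pdC 5 (ψ ς₀ ς₁ ς₂) x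
        + Complex.I * (ω : ℂ) * ψ ς₀ ς₁ (-ς₂) x = 0) (μ ν : ℕ) :
    pdR 4 (currentJ X0 X1 ψ μ ν 0) x + pdR 5 (currentJ X0 X1 ψ μ ν 1) x = 0 := by
  rw [pdR_currentJ hψ, pdR_currentJ hψ, ← mul_add]
  simp only [← Finset.sum_add_distrib]
  refine mul_eq_zero_of_right _ (Finset.sum_eq_zero fun ς₀ h₀ => Finset.sum_eq_zero
    fun ς₁ h₁ => ?_)
  have hmass := sum_signs_inner_sub_eq_zero (g := fun ς₂ => ψ ς₀ ς₁ ς₂ x)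
    (z := fun ς₂ => pdC 4 (ψ ς₀ ς₁ ς₂) x) (w := fun ς₂ => pdC 5 (ψ ς₀ ς₁ ς₂) x) (c := I * ω)
    (by simp) fun ς₂ h₂ => he2 ς₀ (mem_signs_of_mem_finset h₀) ς₁ (mem_signs_of_mem_finset h₁) ς₂ h₂
  calc _ = 2 * (X0 + ς₀ * X1) * sgnpow μ ς₀ * sgnpow ν ς₁ * ∑ ς₂ ∈ ({-1, 1} : Finset ℝ),
        (⟪ψ ς₀ ς₁ ς₂ x, pdC 4 (ψ ς₀ ς₁ ς₂) x⟫_ℝ - ς₂ * ⟪ψ ς₀ ς₁ ς₂ x, pdC 5 (ψ ς₀ ς₁ ς₂) x⟫_ℝ) := by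
        rw [Finset.mul_sum]
        refine Finset.sum_congr rfl fun ς₂ _ => ?_
        simp only [sgnpow_zero, sgnpow_one]
        ring
    _ = 0 := by rw [hmass, mul_zero]

end Conservation

theorem current_joint_conservation
    (ω : ℝ)
    (X0 X1 : ℝ)
    (U : Set (Fin 6 → ℝ)) (hU : IsOpen U)
    (ψ : ℝ → ℝ → ℝ → (Fin 6 → ℝ) → ℂ)
    (hreg : ∀ ς₀ ∈ ({-1, 1} : Set ℝ), ∀ ς₁ ∈ ({-1, 1} : Set ℝ), ∀ ς₂ ∈ ({-1, 1} : Set ℝ),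
      ContDiffOn ℝ 1 (ψ ς₀ ς₁ ς₂) U)
    (heq_ph : ∀ ς₀ ∈ ({-1, 1} : Set ℝ), ∀ ς₁ ∈ ({-1, 1} : Set ℝ), ∀ ς₂ ∈ ({-1, 1} : Set ℝ),
      ∀ x ∈ U, pdC 0 (ψ ς₀ ς₁ ς₂) x - (ς₀ : ℂ) * pdC 1 (ψ ς₀ ς₁ ς₂) x = 0)
    (heq_e1 : ∀ ς₀ ∈ ({-1, 1} : Set ℝ), ∀ ς₁ ∈ ({-1, 1} : Set ℝ), ∀ ς₂ ∈ ({-1, 1} : Set ℝ),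
      ∀ x ∈ U, pdC 2 (ψ ς₀ ς₁ ς₂) x - (ς₁ : ℂ) * pdC 3 (ψ ς₀ ς₁ ς₂) x
        + Complex.I * (ω : ℂ) * ψ ς₀ (-ς₁) ς₂ x = 0)
    (heq_e2 : ∀ ς₀ ∈ ({-1, 1} : Set ℝ), ∀ ς₁ ∈ ({-1, 1} : Set ℝ), ∀ ς₂ ∈ ({-1, 1} : Set ℝ),
      ∀ x ∈ U, pdC 4 (ψ ς₀ ς₁ ς₂) x - (ς₂ : ℂ) * pdC 5 (ψ ς₀ ς₁ ς₂) x
        + Complex.I * (ω : ℂ) * ψ ς₀ ς₁ (-ς₂) x = 0) :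
    (∀ ν ∈ ({0, 1} : Set ℕ), ∀ κ ∈ ({0, 1} : Set ℕ), ∀ x ∈ U,
        pdR 0 (currentJ X0 X1 ψ 0 ν κ) x + pdR 1 (currentJ X0 X1 ψ 1 ν κ) x = 0) ∧
    (∀ μ ∈ ({0, 1} : Set ℕ), ∀ κ ∈ ({0, 1} : Set ℕ), ∀ x ∈ U,
        pdR 2 (currentJ X0 X1 ψ μ 0 κ) x + pdR 3 (currentJ X0 X1 ψ μ 1 κ) x = 0) ∧
    (∀ μ ∈ ({0, 1} : Set ℕ), ∀ ν ∈ ({0, 1} : Set ℕ), ∀ x ∈ U,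
        pdR 4 (currentJ X0 X1 ψ μ ν 0) x + pdR 5 (currentJ X0 X1 ψ μ ν 1) x = 0) := by
  have hd : ∀ x ∈ U, ∀ ς₀ ∈ ({-1, 1} : Set ℝ), ∀ ς₁ ∈ ({-1, 1} : Set ℝ),
      ∀ ς₂ ∈ ({-1, 1} : Set ℝ), DifferentiableAt ℝ (ψ ς₀ ς₁ ς₂) x :=
    fun x hx ς₀ h₀ ς₁ h₁ ς₂ h₂ =>
      (hreg ς₀ h₀ ς₁ h₁ ς₂ h₂).differentiableOn one_ne_zero |>.differentiableAt (hU.mem_nhds hx)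
  refine ⟨fun ν _ κ _ x hx => ?_, fun μ _ κ _ x hx => ?_, fun μ _ ν _ x hx => ?_⟩
  · exact pdR_currentJ_ph_add_eq_zero (hd x hx)
      (fun ς₀ h₀ ς₁ h₁ ς₂ h₂ => heq_ph ς₀ h₀ ς₁ h₁ ς₂ h₂ x hx) ν κ
  · exact pdR_currentJ_e1_add_eq_zero (hd x hx)
      (fun ς₀ h₀ ς₁ h₁ ς₂ h₂ => heq_e1 ς₀ h₀ ς₁ h₁ ς₂ h₂ x hx) μ κ
  · exact pdR_currentJ_e2_add_eq_zero (hd x hx)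
      (fun ς₀ h₀ ς₁ h₁ ς₂ h₂ => heq_e2 ς₀ h₀ ς₁ h₁ ς₂ h₂ x hx) μ ν
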